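/- arXiv:1712.03875 — 4 statements merged into one kernel-verified Lean document; each statement's English description precedes it below -/
import Mathlib

section
/- Let g(x,y) = x²y² + 2x + y². Then for all x, y (in any field of characteristic ≠ 2), (x-1)²(y-1)² · g((x+1)/(x-1), (y+1)/(y-1)) = 4·g(y,x), provided x ≠ 1 and y ≠ 1. -/
/-- `g(x,y) = x²y² + 2x + y²`. -/
def gPoly {K : Type*} [Field K] (x y : K) : K := x ^ 2 * y ^ 2 + 2 * x + y ^ 2

theorem stmt_0 {K : Type*} [Field K] (h2 : (2 : K) ≠ 0) (x y : K)
    (hx : x ≠ 1) (hy : y ≠ 1) :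
    (x - 1) ^ 2 * (y - 1) ^ 2 * gPoly ((x + 1) / (x - 1)) ((y + 1) / (y - 1)) =
      4 * gPoly y x := by
  have hx' : (x - 1) ≠ 0 := sub_ne_zero.mpr hx
  have hy' : (y - 1) ≠ 0 := sub_ne_zero.mpr hy
  set A := (x + 1) / (x - 1) with hAdef
  set C := (y + 1) / (y - 1) with hCdef
  have hA : A * (x - 1) = x + 1 := div_mul_cancel₀ _ hx'
  have hC : C * (y - 1) = y + 1 := div_mul_cancel₀ _ hy'
  unfold gPoly
  linear_combination ((A * (x - 1) + (x + 1)) * C ^ 2 * (y - 1) ^ 2 +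
      2 * (x - 1) * (y - 1) ^ 2) * hA +
    ((x + 1) ^ 2 * (C * (y - 1) + (y + 1)) + (x - 1) ^ 2 * (C * (y - 1) + (y + 1))) * hC
end

section
/- Let J(x) = 256(x²-x+1)³/(x²(x-1)²). If π⁴ + ξ⁴ = 1 with π, ξ nonzero and π⁴ ≠ 1, then J((1-π²)²/(1+π²)²) = 16(ξ⁸ - 16ξ⁴ + 16)³/(ξ¹⁶(1-ξ⁴)), provided 1+π² ≠ 0. -/
/-- `J(x) = 256(x² - x + 1)³ / (x²(x-1)²)`. -/
noncomputable def Jfun (x : ℂ) : ℂ := 256 * (x ^ 2 - x + 1) ^ 3 / (x ^ 2 * (x - 1) ^ 2)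

/-! With `u = π²` the argument is `a / b` for `a = (1 - u)²`, `b = (1 + u)²`, and `J` is
homogeneous in `(a, b)`. On the Fermat curve `ab = (1 - u²)² = ξ⁸`, `a - b = -4u` and
`a² - ab + b² = u⁴ + 14u² + 1 = ξ⁸ - 16ξ⁴ + 16`, which turns `J(a / b)` into the right-hand side. -/

-- In each degenerate case (`a = 0`, `b = 0`, `a = b`) both sides are `0` since `x / 0 = 0`.
theorem Jfun_div (a b : ℂ) :
    Jfun (a / b) = 256 * (a ^ 2 - a * b + b ^ 2) ^ 3 / (a ^ 2 * b ^ 2 * (a - b) ^ 2) := by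
  rcases eq_or_ne a 0 with rfl | ha
  · simp [Jfun]
  rcases eq_or_ne b 0 with rfl | hb
  · simp [Jfun]
  rcases eq_or_ne a b with rfl | hab
  · simp [Jfun, ha]
  have hab' : a / b - 1 ≠ 0 := by rwa [div_sub_one hb, div_ne_zero_iff, sub_ne_zero, and_iff_left hb]
  unfold Jfun
  rw [div_eq_div_iff (by simp [ha, hb, hab']) (by simp [ha, hb, sub_ne_zero.2 hab])]
  field_simp

theorem stmt_2_general (π ξ : ℂ) (hferm : π ^ 4 + ξ ^ 4 = 1) :
    Jfun ((1 - π ^ 2) ^ 2 / (1 + π ^ 2) ^ 2) =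
      16 * (ξ ^ 8 - 16 * ξ ^ 4 + 16) ^ 3 / (ξ ^ 16 * (1 - ξ ^ 4)) := by
  have hprod : (1 - π ^ 2) ^ 2 * (1 + π ^ 2) ^ 2 = ξ ^ 8 := by
    linear_combination (π ^ 4 - ξ ^ 4 - 1) * hferm
  have hnum : ((1 - π ^ 2) ^ 2) ^ 2 - (1 - π ^ 2) ^ 2 * (1 + π ^ 2) ^ 2 + ((1 + π ^ 2) ^ 2) ^ 2
      = ξ ^ 8 - 16 * ξ ^ 4 + 16 := by
    linear_combination (π ^ 4 - ξ ^ 4 + 15) * hferm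
  have hdiff : (1 - π ^ 2) ^ 2 - (1 + π ^ 2) ^ 2 = -4 * π ^ 2 := by ring
  have hπ4 : 1 - ξ ^ 4 = π ^ 4 := by linear_combination -hferm
  calc Jfun ((1 - π ^ 2) ^ 2 / (1 + π ^ 2) ^ 2)
      = 256 * (ξ ^ 8 - 16 * ξ ^ 4 + 16) ^ 3 / (((1 - π ^ 2) ^ 2 * (1 + π ^ 2) ^ 2) ^ 2
          * ((1 - π ^ 2) ^ 2 - (1 + π ^ 2) ^ 2) ^ 2) := by
        rw [Jfun_div, hnum, mul_pow]
    _ = 16 * (16 * (ξ ^ 8 - 16 * ξ ^ 4 + 16) ^ 3) / (16 * (ξ ^ 16 * π ^ 4)) := by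
        rw [hprod, hdiff]; ring
    _ = 16 * (ξ ^ 8 - 16 * ξ ^ 4 + 16) ^ 3 / (ξ ^ 16 * (1 - ξ ^ 4)) := by
        rw [mul_div_mul_left _ _ (by norm_num), hπ4]

theorem stmt_2 (π ξ : ℂ) (hπ : π ≠ 0) (hξ : ξ ≠ 0) (hferm : π ^ 4 + ξ ^ 4 = 1)
    (hπ1 : π ^ 4 ≠ 1) (hden : 1 + π ^ 2 ≠ 0) :
    Jfun ((1 - π ^ 2) ^ 2 / (1 + π ^ 2) ^ 2) =
      16 * (ξ ^ 8 - 16 * ξ ^ 4 + 16) ^ 3 / (ξ ^ 16 * (1 - ξ ^ 4)) :=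
  stmt_2_general π ξ hferm
end

section
/- For elements x, y of a field of characteristic ≠ 2 with x, y ∉ {0, 1}, if J(x) = J(y) where J(x) = 256(x²-x+1)³/(x²(x-1)²), then y ∈ {x, 1-x, 1/x, 1/(1-x), x/(x-1), (x-1)/x}. -/
theorem stmt_3 {K : Type*} [Field K] (h2 : (2 : K) ≠ 0) (x y : K)
    (hx0 : x ≠ 0) (hx1 : x ≠ 1) (hy0 : y ≠ 0) (hy1 : y ≠ 1)
    (hJ : 256 * (x ^ 2 - x + 1) ^ 3 / (x ^ 2 * (x - 1) ^ 2) =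
          256 * (y ^ 2 - y + 1) ^ 3 / (y ^ 2 * (y - 1) ^ 2)) :
    y = x ∨ y = 1 - x ∨ y = 1 / x ∨ y = 1 / (1 - x) ∨
      y = x / (x - 1) ∨ y = (x - 1) / x := by
  have hx1' : x - 1 ≠ 0 := sub_ne_zero.mpr hx1
  have hx1'' : (1 : K) - x ≠ 0 := sub_ne_zero.mpr (Ne.symm hx1)
  have hy1' : y - 1 ≠ 0 := sub_ne_zero.mpr hy1
  have hxd : x ^ 2 * (x - 1) ^ 2 ≠ 0 := mul_ne_zero (pow_ne_zero _ hx0) (pow_ne_zero _ hx1')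
  have hyd : y ^ 2 * (y - 1) ^ 2 ≠ 0 := mul_ne_zero (pow_ne_zero _ hy0) (pow_ne_zero _ hy1')
  have h256 : (256 : K) ≠ 0 := by
    have : (256 : K) = 2 ^ 8 := by norm_num
    rw [this]; exact pow_ne_zero _ h2
  have key : 256 * (x ^ 2 - x + 1) ^ 3 * (y ^ 2 * (y - 1) ^ 2) =
      256 * (y ^ 2 - y + 1) ^ 3 * (x ^ 2 * (x - 1) ^ 2) :=
    (div_eq_div_iff hxd hyd).mp hJ
  have hq : (y - x) * (y - (1 - x)) * (x * y - 1) * ((1 - x) * y - 1) *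
      ((x - 1) * y - x) * (x * y - (x - 1)) = 0 := by
    have h := mul_left_cancel₀ h256 (by linear_combination key :
      256 * ((x ^ 2 - x + 1) ^ 3 * (y ^ 2 * (y - 1) ^ 2)) =
      256 * ((y ^ 2 - y + 1) ^ 3 * (x ^ 2 * (x - 1) ^ 2)))
    linear_combination h
  rcases mul_eq_zero.mp hq with h | h
  · rcases mul_eq_zero.mp h with h | h
    · rcases mul_eq_zero.mp h with h | h
      · rcases mul_eq_zero.mp h with h | h
        · rcases mul_eq_zero.mp h with h | h
          · exact Or.inl (sub_eq_zero.mp h)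
          · exact Or.inr (Or.inl (sub_eq_zero.mp h))
        · refine Or.inr (Or.inr (Or.inl ?_))
          field_simp
          linear_combination h
      · refine Or.inr (Or.inr (Or.inr (Or.inl ?_)))
        rw [eq_div_iff hx1'']
        linear_combination h
    · refine Or.inr (Or.inr (Or.inr (Or.inr (Or.inl ?_))))
      rw [eq_div_iff hx1']
      linear_combination h
  · refine Or.inr (Or.inr (Or.inr (Or.inr (Or.inr ?_))))
    rw [eq_div_iff hx0]
    linear_combination h
end

section
/- Define R̃⁽¹⁾(x, x₁) = g₁(x, x₁) with g₁(x,y) = 4x²y² + x + y², and inductively R̃⁽ⁿ⁾(x, xₙ) = Res_{x_{n-1}}(R̃⁽ⁿ⁻¹⁾(x, x_{n-1}), g₁(x_{n-1}, xₙ)). Then for every n ≥ 1, the reduction of R̃⁽ⁿ⁾(x, xₙ) modulo 2 equals xₙ^(2ⁿ) + x in 𝔽₂[x, xₙ]. -/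
open Polynomial

/-- The Sylvester-style matrix of two polynomials `p, q`, with `n` shifted rows of
coefficients of `p` and `m` shifted rows of coefficients of `q`. -/
noncomputable def sylvesterMatrix {R : Type*} [CommRing R] (p q : R[X]) (m n : ℕ) :
    Matrix (Fin (n + m)) (Fin (n + m)) R := fun i j =>
  if (i : ℕ) < n then
    (if (i : ℕ) ≤ (j : ℕ) then p.coeff ((j : ℕ) - (i : ℕ)) else 0)
  else
    (if (i : ℕ) - n ≤ (j : ℕ) then q.coeff ((j : ℕ) - ((i : ℕ) - n)) else 0)

/-- The resultant of two polynomials, as the determinant of their Sylvester matrix. -/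
noncomputable def resultant {R : Type*} [CommRing R] (p q : R[X]) : R :=
  (sylvesterMatrix p q p.natDegree q.natDegree).det

/-- `g₁(t, y) = 4t²y² + t + y²`, viewed as a polynomial in `t` with coefficients in
`(ℤ[x])[y]` (the variable `x` does not occur). -/
noncomputable def g1t : Polynomial (Polynomial (Polynomial ℤ)) :=
  C (4 * (X : Polynomial (Polynomial ℤ)) ^ 2) * X ^ 2 + X +
    C ((X : Polynomial (Polynomial ℤ)) ^ 2)

/-- The iterated resultants `R̃⁽ⁿ⁾(x, xₙ)`, as polynomials in `xₙ` with coefficients in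
`ℤ[x]`.  `Rtilde 1 = g₁(x, x₁) = (4x²+1)x₁² + x`, and
`Rtilde (n+1) = Res_{t}(Rtilde n (x, t), g₁(t, x_{n+1}))`. -/
noncomputable def Rtilde : ℕ → Polynomial (Polynomial ℤ)
  | 0 => 1
  | 1 => C (4 * (X : Polynomial ℤ) ^ 2 + 1) * X ^ 2 + C (X : Polynomial ℤ)
  | (n + 2) => _root_.resultant ((Rtilde (n + 1)).map (C : Polynomial ℤ →+* Polynomial (Polynomial ℤ))) g1t

/-!
Reduction mod 2 commutes with the resultant as long as the degrees used for the Sylvester matrix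
stay the true ones, and mod 2 we have `g₁(t, y) ≡ t + y²` and, inductively, `R̃⁽ⁿ⁾ ≡ tᵈ + x` with
`d = 2ⁿ`; eliminating `t = -y²` gives `Res_t(tᵈ + x, t + y²) = ±(y^{2d} + x)`, and signs vanish in
characteristic 2. For this to apply at the next step, the degree of `R̃⁽ⁿ⁾` over `ℤ` must be exactly
`2ⁿ`: it is at least that because its reduction has degree `2ⁿ`, and at most that because in the
Sylvester matrix only the `2ⁿ` rows of coefficients of `g₁` involve `y`, each with degree `≤ 2`.
-/

theorem sylvesterMatrix_eq_transpose_sylvester {R : Type*} [CommRing R] {p q : R[X]} {m n : ℕ}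
    (hp : p.natDegree ≤ m) (hq : q.natDegree ≤ n) :
    sylvesterMatrix p q m n = (Polynomial.sylvester q p n m).transpose := by
  ext i j
  induction i using Fin.addCases with
  | left i =>
    simp only [sylvesterMatrix, Matrix.transpose_apply, Polynomial.sylvester, Matrix.of_apply,
      Fin.addCases_left, Fin.val_castAdd, Set.mem_Icc]
    split_ifs <;> first | rfl | omega | exact coeff_eq_zero_of_natDegree_lt (by omega)
  | right i =>
    simp only [sylvesterMatrix, Matrix.transpose_apply, Polynomial.sylvester, Matrix.of_apply,
      Fin.addCases_right, Fin.val_natAdd, Set.mem_Icc, Nat.add_sub_cancel_left]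
    split_ifs <;> first | rfl | omega | exact coeff_eq_zero_of_natDegree_lt (by omega)

theorem resultant_eq_resultant_swap {R : Type*} [CommRing R] (p q : R[X]) :
    _root_.resultant p q = Polynomial.resultant q p := by
  rw [_root_.resultant, sylvesterMatrix_eq_transpose_sylvester le_rfl le_rfl, Matrix.det_transpose,
    Polynomial.resultant]

theorem resultant_X_add_C_X_pow_add_C {R : Type*} [CommRing R] (b c : R) {d : ℕ} (hd : d ≠ 0) :
    Polynomial.resultant (X + C b) (X ^ d + C c) 2 d = (-1) ^ d * ((-b) ^ d + c) := by
  nontriviality R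
  rw [Polynomial.resultant_succ_left_deg _ _ _ _ (natDegree_X_add_C b).le,
    Polynomial.resultant_X_add_C_left _ _ _ natDegree_X_pow_add_C.le]
  simp [coeff_C, hd]

theorem natDegree_det_le_sum {ι S : Type*} [Fintype ι] [DecidableEq ι] [CommRing S]
    (M : Matrix ι ι S[X]) (f : ι → ℕ) (h : ∀ i j, (M i j).natDegree ≤ f i) :
    M.det.natDegree ≤ ∑ i, f i := by
  rw [Matrix.det_apply]
  refine natDegree_sum_le_of_forall_le _ _ fun σ _ => ?_
  rw [Units.smul_def, zsmul_eq_mul]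
  refine natDegree_mul_le.trans ?_
  rw [natDegree_intCast, zero_add, ← Equiv.sum_comp σ f]
  exact (natDegree_prod_le _ _).trans (Finset.sum_le_sum fun i _ => h (σ i) i)

theorem natDegree_resultant_le {A : Type*} [CommRing A] (p q : A[X][X]) {a b : ℕ}
    (hp : ∀ k, (p.coeff k).natDegree ≤ a) (hq : ∀ k, (q.coeff k).natDegree ≤ b) :
    (_root_.resultant p q).natDegree ≤ q.natDegree * a + p.natDegree * b := by
  have hrows : ∀ i j, (sylvesterMatrix p q p.natDegree q.natDegree i j).natDegree ≤
      if (i : ℕ) < q.natDegree then a else b := by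
    intro i j
    simp only [sylvesterMatrix]
    split_ifs <;> simp [hp, hq]
  refine (natDegree_det_le_sum _ _ hrows).trans ?_
  simp [Fin.sum_univ_add]

theorem natDegree_g1t : g1t.natDegree = 2 := by
  unfold g1t
  compute_degree!

theorem natDegree_coeff_g1t_le (k : ℕ) : (g1t.coeff k).natDegree ≤ 2 := by
  simp only [g1t, coeff_add, coeff_C_mul, coeff_X_pow, coeff_X, coeff_C]
  split_ifs <;> compute_degree

theorem natDegree_resultant_g1t_le (P : ℤ[X][X]) :
    (_root_.resultant (P.map C) g1t).natDegree ≤ 2 * P.natDegree := by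
  have h := natDegree_resultant_le (P.map C) g1t (a := 0) (fun k => by simp [coeff_map])
    natDegree_coeff_g1t_le
  rwa [natDegree_map_eq_of_injective C_injective, mul_zero, zero_add, mul_comm] at h

theorem map_g1t_zmod_two :
    g1t.map (mapRingHom (mapRingHom (Int.castRingHom (ZMod 2)))) = X + C (X ^ 2) := by
  simp [g1t, CharP.ofNat_eq_zero' _ 2 4 (by norm_num)]

theorem map_resultant_g1t_zmod_two {P : ℤ[X][X]} {d : ℕ} (hd : d ≠ 0) (hdeg : P.natDegree = d)
    {c : (ZMod 2)[X]} (hP : P.map (mapRingHom (Int.castRingHom (ZMod 2))) = X ^ d + C c) :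
    (_root_.resultant (P.map C) g1t).map (mapRingHom (Int.castRingHom (ZMod 2))) =
      X ^ (2 * d) + C c := by
  set φ := mapRingHom (Int.castRingHom (ZMod 2))
  have hPC : (P.map C).map (mapRingHom φ) = X ^ d + C (C c) := by
    rw [map_map, mapRingHom_comp_C, ← map_map, hP]
    simp
  calc (_root_.resultant (P.map C) g1t).map φ
      = mapRingHom φ (Polynomial.resultant g1t (P.map C)) := by
        rw [resultant_eq_resultant_swap, coe_mapRingHom]
    _ = Polynomial.resultant (X + C (X ^ 2)) (X ^ d + C (C c)) 2 d := by
        rw [← resultant_map_map, natDegree_g1t, natDegree_map_eq_of_injective C_injective, hdeg,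
          map_g1t_zmod_two, hPC]
    _ = (-1 : (ZMod 2)[X][X]) ^ d * ((-X ^ 2) ^ d + C c) := resultant_X_add_C_X_pow_add_C _ _ hd
    _ = X ^ (2 * d) + C c := by simp [CharTwo.neg_eq, pow_mul]

theorem natDegree_Rtilde_one : (Rtilde 1).natDegree = 2 := by
  simp only [Rtilde]
  compute_degree!
  exact fun h => by simpa using congrArg (coeff · 0) h

theorem map_Rtilde_one_zmod_two :
    (Rtilde 1).map (mapRingHom (Int.castRingHom (ZMod 2))) = X ^ 2 + C X := by
  simp [Rtilde, CharP.ofNat_eq_zero' _ 2 4 (by norm_num)]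

theorem natDegree_Rtilde_succ_and_map_zmod_two (n : ℕ) :
    (Rtilde (n + 1)).natDegree = 2 ^ (n + 1) ∧
      (Rtilde (n + 1)).map (mapRingHom (Int.castRingHom (ZMod 2))) =
        X ^ 2 ^ (n + 1) + C X := by
  induction n with
  | zero => exact ⟨natDegree_Rtilde_one, map_Rtilde_one_zmod_two⟩
  | succ n ih =>
    obtain ⟨hdeg, hmap⟩ := ih
    have hmap' := map_resultant_g1t_zmod_two (pow_ne_zero _ two_ne_zero) hdeg hmap
    rw [← pow_succ'] at hmap'
    refine ⟨le_antisymm ?_ ?_, hmap'⟩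
    · exact (natDegree_resultant_g1t_le _).trans_eq (by rw [hdeg, ← pow_succ'])
    · calc 2 ^ (n + 2) = ((X : (ZMod 2)[X][X]) ^ 2 ^ (n + 2) + C X).natDegree :=
            natDegree_X_pow_add_C.symm
        _ = ((Rtilde (n + 2)).map (mapRingHom (Int.castRingHom (ZMod 2)))).natDegree := by
            rw [← hmap']; rfl
        _ ≤ (Rtilde (n + 2)).natDegree := natDegree_map_le

theorem stmt_8 (n : ℕ) (hn : 1 ≤ n) :
    (Rtilde n).map (Polynomial.mapRingHom (Int.castRingHom (ZMod 2))) =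
      (X : Polynomial (Polynomial (ZMod 2))) ^ (2 ^ n) + C (X : Polynomial (ZMod 2)) := by
  obtain ⟨m, rfl⟩ := Nat.exists_eq_add_of_le' hn
  exact (natDegree_Rtilde_succ_and_map_zmod_two m).2
end
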